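/- Fix x ∈ ℝⁿ, assume every node has degree mᵢ ≥ 1 and F has full column rank, and let ρ₀ ∈ (0,1). Then the function ρ ↦ T₂(x,ρ) is twice differentiable at ρ₀ and its second derivative at ρ₀ equals 2·s(ρ₀)ᵀ W F [Fᵀ(D−ρ₀W)F]⁻¹ Fᵀ W s(ρ₀), where s(ρ₀) = [Iₙ − F(Fᵀ(D−ρ₀W)F)⁻¹Fᵀ(D−ρ₀W)]x; in particular this second derivative is nonnegative. -/

import Mathlib

/-!
Write `T₂(x, ρ) = u(ρ)ᵀ N(ρ)⁻¹ u(ρ)` with `N(ρ) = Fᵀ(D - ρW)F` and `u(ρ) = Fᵀ(D - ρW)x`, both affine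
in `ρ`, with slopes `-FᵀWF` and `-FᵀWx`. For `β(ρ) = N(ρ)⁻¹u(ρ)` one finds `β' = -N⁻¹w` where
`w = FᵀWx - FᵀWFβ = FᵀW s(ρ)`; by symmetry of `N` this gives `T₂' = βᵀFᵀWFβ - 2 xᵀWFβ`, and
differentiating once more `T₂'' = 2 wᵀN⁻¹w`. This is nonnegative because `N(ρ)` is positive
definite: `F` is injective and `D - ρW` is positive definite for `0 ≤ ρ < 1`, since
`xᵀWx ≤ ∑ mᵢxᵢ²` for a symmetric nonnegative `W`.
-/

open Matrix

/-- Degree of node `i`: `mᵢ = ∑ⱼ Wᵢⱼ`. -/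
noncomputable def degVec {n : ℕ} (W : Matrix (Fin n) (Fin n) ℝ) (i : Fin n) : ℝ := ∑ j, W i j

/-- `R(ρ) = D - ρ W` where `D = diag(m₁,…,mₙ)`. -/
noncomputable def Rmat {n : ℕ} (W : Matrix (Fin n) (Fin n) ℝ) (ρ : ℝ) :
    Matrix (Fin n) (Fin n) ℝ :=
  Matrix.diagonal (degVec W) - ρ • W

/-- `K(ρ) = (D-ρW) - (D-ρW)F[Fᵀ(D-ρW)F]⁻¹Fᵀ(D-ρW)`. -/
noncomputable def Kmat {n p : ℕ} (W : Matrix (Fin n) (Fin n) ℝ)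
    (F : Matrix (Fin n) (Fin (p + 1)) ℝ) (ρ : ℝ) : Matrix (Fin n) (Fin n) ℝ :=
  Rmat W ρ - Rmat W ρ * F * (Fᵀ * Rmat W ρ * F)⁻¹ * Fᵀ * Rmat W ρ

/-- `T(x,ρ) = xᵀ K(ρ) x`. -/
noncomputable def Tcrit {n p : ℕ} (W : Matrix (Fin n) (Fin n) ℝ)
    (F : Matrix (Fin n) (Fin (p + 1)) ℝ) (x : Fin n → ℝ) (ρ : ℝ) : ℝ :=
  x ⬝ᵥ (Kmat W F ρ).mulVec x


/-- `T₂(x,ρ) = xᵀ(D-ρW)F[Fᵀ(D-ρW)F]⁻¹Fᵀ(D-ρW)x`. -/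
noncomputable def T2crit {n p : ℕ} (W : Matrix (Fin n) (Fin n) ℝ)
    (F : Matrix (Fin n) (Fin (p + 1)) ℝ) (x : Fin n → ℝ) (ρ : ℝ) : ℝ :=
  x ⬝ᵥ (Rmat W ρ * F * (Fᵀ * Rmat W ρ * F)⁻¹ * Fᵀ * Rmat W ρ).mulVec x

/-- The residual vector `s(ρ) = [Iₙ - F(Fᵀ(D-ρW)F)⁻¹Fᵀ(D-ρW)]x`. -/
noncomputable def sresid {n p : ℕ} (W : Matrix (Fin n) (Fin n) ℝ)
    (F : Matrix (Fin n) (Fin (p + 1)) ℝ) (x : Fin n → ℝ) (ρ : ℝ) : Fin n → ℝ :=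
  ((1 : Matrix (Fin n) (Fin n) ℝ) - F * (Fᵀ * Rmat W ρ * F)⁻¹ * Fᵀ * Rmat W ρ).mulVec x

open Filter Topology

theorem Matrix.IsSymm.dotProduct_mulVec_comm {ι R : Type*} [Fintype ι] [CommSemiring R]
    {A : Matrix ι ι R} (hA : A.IsSymm) (v w : ι → R) : v ⬝ᵥ A *ᵥ w = A *ᵥ v ⬝ᵥ w := by
  rw [dotProduct_mulVec, ← mulVec_transpose, hA.eq]

theorem Matrix.IsSymm.transpose_mul_mul {ι κ R : Type*} [Fintype ι] [CommSemiring R]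
    {M : Matrix ι ι R} (hM : M.IsSymm) (F : Matrix ι κ R) : (Fᵀ * M * F).IsSymm := by
  simp only [IsSymm, transpose_mul, transpose_transpose, hM.eq, Matrix.mul_assoc]

theorem dotProduct_mul_mul_transpose_mulVec {ι κ R : Type*} [Fintype ι] [Fintype κ]
    [CommSemiring R] (M : Matrix ι κ R) (G : Matrix κ κ R) (x : ι → R) :
    x ⬝ᵥ (M * G * Mᵀ) *ᵥ x = Mᵀ *ᵥ x ⬝ᵥ G *ᵥ (Mᵀ *ᵥ x) := by
  rw [← mulVec_mulVec, ← mulVec_mulVec, dotProduct_mulVec, mulVec_transpose]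

theorem Matrix.mulVec_injective_of_rank_eq {m κ K : Type*} [Fintype m] [Fintype κ] [Field K]
    (A : Matrix m κ K) (hA : A.rank = Fintype.card κ) : Function.Injective A.mulVec :=
  mulVec_injective_iff.2 <| linearIndependent_iff_card_eq_finrank_span.2 <| by
    rw [← hA, rank_eq_finrank_span_cols, Set.finrank]

theorem hasDerivAt_const_sub_smul {E : Type*} [NormedAddCommGroup E] [NormedSpace ℝ E]
    (a b : E) (t : ℝ) : HasDerivAt (fun s => a - s • b) (-b) t :=
  (((hasDerivAt_id t).smul_const b).const_sub a).congr_deriv (by simp)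

theorem HasDerivAt.dotProduct {ι : Type*} [Fintype ι] {u v : ℝ → ι → ℝ} {u' v' : ι → ℝ} {t : ℝ}
    (hu : HasDerivAt u u' t) (hv : HasDerivAt v v' t) :
    HasDerivAt (fun s => u s ⬝ᵥ v s) (u' ⬝ᵥ v t + u t ⬝ᵥ v') t := by
  simp only [_root_.dotProduct, ← Finset.sum_add_distrib]
  exact HasDerivAt.fun_sum fun i _ => (hasDerivAt_pi.1 hu i).mul (hasDerivAt_pi.1 hv i)

section MatrixCalculus

/- `HasDerivAt` only sees the topology of `Matrix ι ι ℝ`; the operator norm is chosen here because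
it makes matrices a complete normed algebra, as `hasFDerivAt_ringInverse` requires. -/
attribute [local instance] Matrix.linftyOpNormedRing Matrix.linftyOpNormedAlgebra

variable {ι : Type*} [Fintype ι] [DecidableEq ι] {t : ℝ}

theorem Matrix.hasDerivAt_inv {N : ℝ → Matrix ι ι ℝ} {N' : Matrix ι ι ℝ}
    (hN : HasDerivAt N N' t) (ht : IsUnit (N t)) :
    HasDerivAt (fun s => (N s)⁻¹) (-((N t)⁻¹ * N' * (N t)⁻¹)) t := by
  have := (hasFDerivAt_ringInverse (𝕜 := ℝ) ht.unit).comp_hasDerivAt_of_eq t hN ht.unit_spec.symm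
  simp only [Function.comp_def, ← nonsing_inv_eq_ringInverse, coe_units_inv,
    IsUnit.unit_spec] at this
  exact this

theorem HasDerivAt.matrix_apply {A : ℝ → Matrix ι ι ℝ} {A' : Matrix ι ι ℝ}
    (hA : HasDerivAt A A' t) (i j : ι) : HasDerivAt (fun s => A s i j) (A' i j) t :=
  (LinearMap.toContinuousLinearMap (entryLinearMap ℝ ℝ i j)).hasFDerivAt.comp_hasDerivAt t hA

theorem HasDerivAt.mulVec {A : ℝ → Matrix ι ι ℝ} {A' : Matrix ι ι ℝ} {u : ℝ → ι → ℝ}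
    {u' : ι → ℝ} (hA : HasDerivAt A A' t) (hu : HasDerivAt u u' t) :
    HasDerivAt (fun s => A s *ᵥ u s) (A' *ᵥ u t + A t *ᵥ u') t := by
  refine hasDerivAt_pi.2 fun i => ?_
  simp only [Matrix.mulVec, _root_.dotProduct, Pi.add_apply, ← Finset.sum_add_distrib]
  exact HasDerivAt.fun_sum fun j _ => (hA.matrix_apply i j).mul (hasDerivAt_pi.1 hu j)

variable (N₀ C : Matrix ι ι ℝ) (a b : ι → ℝ)

/- For `N₀ - ρ • C = Fᵀ(D - ρW)F` and `a - ρ • b = Fᵀ(D - ρW)x`, `pencilSolve` is the GLS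
coefficient `β(ρ)` and `pencilQuad` is `T₂(x, ρ)`. -/
noncomputable def pencilSolve (s : ℝ) : ι → ℝ := (N₀ - s • C)⁻¹ *ᵥ (a - s • b)

noncomputable def pencilQuad (s : ℝ) : ℝ := (a - s • b) ⬝ᵥ (N₀ - s • C)⁻¹ *ᵥ (a - s • b)

theorem hasDerivAt_pencilSolve (ht : IsUnit (N₀ - t • C)) :
    HasDerivAt (pencilSolve N₀ C a b)
      (-((N₀ - t • C)⁻¹ *ᵥ (b - C *ᵥ pencilSolve N₀ C a b t))) t := by
  convert! (Matrix.hasDerivAt_inv (hasDerivAt_const_sub_smul N₀ C t) ht).mulVec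
    (hasDerivAt_const_sub_smul a b t) using 1
  simp only [pencilSolve, mulVec_neg, mulVec_sub, ← mulVec_mulVec, mul_neg, neg_neg, neg_mul]
  abel

theorem hasDerivAt_pencilQuad (hN : (N₀ - t • C).IsSymm) (ht : IsUnit (N₀ - t • C)) :
    HasDerivAt (pencilQuad N₀ C a b)
      (pencilSolve N₀ C a b t ⬝ᵥ C *ᵥ pencilSolve N₀ C a b t
        - 2 * (b ⬝ᵥ pencilSolve N₀ C a b t)) t := by
  convert! (hasDerivAt_const_sub_smul a b t).dotProduct (hasDerivAt_pencilSolve N₀ C a b ht)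
    using 1
  rw [dotProduct_neg, hN.inv.dotProduct_mulVec_comm]
  simp only [pencilSolve, neg_dotProduct, dotProduct_sub, dotProduct_comm b]
  ring

theorem hasDerivAt_deriv_pencilQuad (hN₀ : N₀.IsSymm) (hC : C.IsSymm)
    (hN : ∀ᶠ s in 𝓝 t, IsUnit (N₀ - s • C)) :
    HasDerivAt (deriv (pencilQuad N₀ C a b))
      (2 * ((b - C *ᵥ pencilSolve N₀ C a b t) ⬝ᵥ
        (N₀ - t • C)⁻¹ *ᵥ (b - C *ᵥ pencilSolve N₀ C a b t))) t := by
  have hv := hasDerivAt_pencilSolve N₀ C a b hN.self_of_nhds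
  set v := pencilSolve N₀ C a b
  have hderiv : deriv (pencilQuad N₀ C a b) =ᶠ[𝓝 t] fun s => v s ⬝ᵥ C *ᵥ v s - 2 * (b ⬝ᵥ v s) :=
    hN.mono fun s hs => (hasDerivAt_pencilQuad N₀ C a b (hN₀.sub (hC.smul s)) hs).deriv
  refine HasDerivAt.congr_of_eventuallyEq ?_ hderiv
  convert! (hv.dotProduct ((hasDerivAt_const t C).mulVec hv)).sub
    (((hasDerivAt_const t b).dotProduct hv).const_mul 2) using 1
  generalize (N₀ - t • C)⁻¹ *ᵥ (b - C *ᵥ v t) = y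
  rw [zero_mulVec, zero_dotProduct, zero_add, zero_add, mulVec_neg, dotProduct_neg, dotProduct_neg,
    neg_dotProduct, dotProduct_comm y, hC.dotProduct_mulVec_comm (v t), sub_dotProduct]
  ring

end MatrixCalculus

section Criterion

variable {n p : ℕ} (W : Matrix (Fin n) (Fin n) ℝ)

theorem dotProduct_mulVec_le_sum_degVec_mul_sq (hW : W.IsSymm) (hW0 : ∀ i j, 0 ≤ W i j)
    (x : Fin n → ℝ) : x ⬝ᵥ W *ᵥ x ≤ ∑ i, degVec W i * x i ^ 2 := by
  have hrow : ∑ i, ∑ j, W i j * x i ^ 2 = ∑ i, degVec W i * x i ^ 2 := by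
    simp only [degVec, Finset.sum_mul]
  have hcol : ∑ i, ∑ j, W i j * x j ^ 2 = ∑ i, degVec W i * x i ^ 2 := by
    rw [Finset.sum_comm]
    simp only [degVec, Finset.sum_mul, hW.apply]
  have hquad : x ⬝ᵥ W *ᵥ x = ∑ i, ∑ j, W i j * (x i * x j) := by
    simp only [dotProduct, mulVec, Finset.mul_sum]
    exact Finset.sum_congr rfl fun i _ => Finset.sum_congr rfl fun j _ => by ring
  have hnonneg : 0 ≤ ∑ i, ∑ j, W i j * (x i - x j) ^ 2 :=
    Finset.sum_nonneg fun i _ => Finset.sum_nonneg fun j _ => mul_nonneg (hW0 i j) (sq_nonneg _)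
  have hexpand : ∑ i, ∑ j, W i j * (x i - x j) ^ 2 = ∑ i, ∑ j, W i j * x i ^ 2
      + ∑ i, ∑ j, W i j * x j ^ 2 - 2 * ∑ i, ∑ j, W i j * (x i * x j) := by
    simp only [Finset.mul_sum, ← Finset.sum_add_distrib, ← Finset.sum_sub_distrib]
    exact Finset.sum_congr rfl fun i _ => Finset.sum_congr rfl fun j _ => by ring
  linarith

theorem Rmat_isSymm (hW : W.IsSymm) (ρ : ℝ) : (Rmat W ρ).IsSymm :=
  (isSymm_diagonal _).sub (hW.smul ρ)

theorem Rmat_posDef (hW : W.IsSymm) (hW0 : ∀ i j, 0 ≤ W i j) (hdeg : ∀ i, 1 ≤ degVec W i)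
    {ρ : ℝ} (hρ0 : 0 ≤ ρ) (hρ1 : ρ < 1) : (Rmat W ρ).PosDef := by
  refine .of_dotProduct_mulVec_pos (isHermitian_iff_isSymm.2 (Rmat_isSymm W hW ρ)) fun x hx => ?_
  have hquad : star x ⬝ᵥ Rmat W ρ *ᵥ x = ∑ i, degVec W i * x i ^ 2 - ρ * (x ⬝ᵥ W *ᵥ x) := by
    simp only [Rmat, star_trivial, sub_mulVec, smul_mulVec, dotProduct_sub, dotProduct_smul,
      smul_eq_mul]
    simp only [mulVec_diagonal, dotProduct]
    congr 1
    exact Finset.sum_congr rfl fun i _ => by ring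
  have hsq : 0 < ∑ i, x i ^ 2 := by
    obtain ⟨i, hi⟩ := Function.ne_iff.1 hx
    exact Finset.sum_pos' (fun j _ => sq_nonneg _) ⟨i, Finset.mem_univ i, sq_pos_of_ne_zero hi⟩
  have hdeg_sq : ∑ i, x i ^ 2 ≤ ∑ i, degVec W i * x i ^ 2 :=
    Finset.sum_le_sum fun i _ => le_mul_of_one_le_left (sq_nonneg _) (hdeg i)
  have hW_le := dotProduct_mulVec_le_sum_degVec_mul_sq W hW hW0 x
  rw [hquad]
  nlinarith

variable (F : Matrix (Fin n) (Fin (p + 1)) ℝ) (x : Fin n → ℝ)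

theorem transpose_mul_Rmat_mul (ρ : ℝ) :
    Fᵀ * Rmat W ρ * F = Fᵀ * diagonal (degVec W) * F - ρ • (Fᵀ * W * F) := by
  rw [Rmat, Matrix.mul_sub, Matrix.sub_mul, Matrix.mul_smul, Matrix.smul_mul]

theorem transpose_mulVec_Rmat_mulVec (ρ : ℝ) :
    Fᵀ *ᵥ (Rmat W ρ *ᵥ x) = Fᵀ *ᵥ (diagonal (degVec W) *ᵥ x) - ρ • (Fᵀ *ᵥ (W *ᵥ x)) := by
  rw [Rmat, sub_mulVec, smul_mulVec, mulVec_sub, mulVec_smul]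

theorem T2crit_eq_pencilQuad (hW : W.IsSymm) :
    T2crit W F x = pencilQuad (Fᵀ * diagonal (degVec W) * F) (Fᵀ * W * F)
      (Fᵀ *ᵥ (diagonal (degVec W) *ᵥ x)) (Fᵀ *ᵥ (W *ᵥ x)) := by
  funext ρ
  have hRF : (Rmat W ρ * F)ᵀ = Fᵀ * Rmat W ρ := by rw [transpose_mul, (Rmat_isSymm W hW ρ).eq]
  rw [T2crit, pencilQuad, ← transpose_mul_Rmat_mul, ← transpose_mulVec_Rmat_mulVec,
    show Rmat W ρ * F * (Fᵀ * Rmat W ρ * F)⁻¹ * Fᵀ * Rmat W ρ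
      = Rmat W ρ * F * (Fᵀ * Rmat W ρ * F)⁻¹ * (Rmat W ρ * F)ᵀ by
        rw [hRF, Matrix.mul_assoc _ Fᵀ],
    dotProduct_mul_mul_transpose_mulVec, hRF]
  simp only [← mulVec_mulVec]

theorem sresid_dotProduct_eq (hW : W.IsSymm) (ρ : ℝ) :
    sresid W F x ρ ⬝ᵥ (W * F * (Fᵀ * Rmat W ρ * F)⁻¹ * Fᵀ * W) *ᵥ sresid W F x ρ =
      (Fᵀ * W) *ᵥ sresid W F x ρ ⬝ᵥ (Fᵀ * Rmat W ρ * F)⁻¹ *ᵥ ((Fᵀ * W) *ᵥ sresid W F x ρ) := by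
  have hWF : (W * F)ᵀ = Fᵀ * W := by rw [transpose_mul, hW.eq]
  rw [← hWF, ← dotProduct_mul_mul_transpose_mulVec, hWF, Matrix.mul_assoc _ Fᵀ]

theorem transpose_mul_mulVec_sresid (ρ : ℝ) :
    (Fᵀ * W) *ᵥ sresid W F x ρ = Fᵀ *ᵥ (W *ᵥ x) - (Fᵀ * W * F) *ᵥ pencilSolve
      (Fᵀ * diagonal (degVec W) * F) (Fᵀ * W * F) (Fᵀ *ᵥ (diagonal (degVec W) *ᵥ x))
      (Fᵀ *ᵥ (W *ᵥ x)) ρ := by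
  rw [sresid, pencilSolve, ← transpose_mul_Rmat_mul, ← transpose_mulVec_Rmat_mulVec,
    mulVec_mulVec, Matrix.mul_sub, Matrix.mul_one, sub_mulVec]
  simp only [mulVec_mulVec, Matrix.mul_assoc]

end Criterion

theorem second_deriv_T2_general {n p : ℕ} (W : Matrix (Fin n) (Fin n) ℝ)
    (hWsymm : W.IsSymm) (hW01 : ∀ i j, W i j = 0 ∨ W i j = 1)
    (hdeg : ∀ i, 1 ≤ degVec W i)
    (F : Matrix (Fin n) (Fin (p + 1)) ℝ) (hF : F.rank = p + 1)
    (x : Fin n → ℝ) (ρ₀ : ℝ) (hρ₀ : ρ₀ ∈ Set.Ioo (0 : ℝ) 1) :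
    DifferentiableAt ℝ (fun ρ => T2crit W F x ρ) ρ₀ ∧
    DifferentiableAt ℝ (deriv (fun ρ => T2crit W F x ρ)) ρ₀ ∧
    deriv (deriv (fun ρ => T2crit W F x ρ)) ρ₀ =
      2 * (sresid W F x ρ₀ ⬝ᵥ
        (W * F * (Fᵀ * Rmat W ρ₀ * F)⁻¹ * Fᵀ * W).mulVec (sresid W F x ρ₀)) ∧
    0 ≤ 2 * (sresid W F x ρ₀ ⬝ᵥ
        (W * F * (Fᵀ * Rmat W ρ₀ * F)⁻¹ * Fᵀ * W).mulVec (sresid W F x ρ₀)) := by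
  have hW0 : ∀ i j, 0 ≤ W i j := fun i j => by rcases hW01 i j with h | h <;> simp [h]
  have hN₀ := (isSymm_diagonal (degVec W)).transpose_mul_mul F
  have hC := hWsymm.transpose_mul_mul F
  have hpd : ∀ ρ ∈ Set.Ioo (0 : ℝ) 1,
      (Fᵀ * diagonal (degVec W) * F - ρ • (Fᵀ * W * F)).PosDef := fun ρ hρ => by
    rw [← transpose_mul_Rmat_mul]
    exact (Rmat_posDef W hWsymm hW0 hdeg hρ.1.le hρ.2).conjTranspose_mul_mul_same
      (F.mulVec_injective_of_rank_eq (by rw [hF, Fintype.card_fin]))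
  have hunit : ∀ᶠ ρ in 𝓝 ρ₀, IsUnit (Fᵀ * diagonal (degVec W) * F - ρ • (Fᵀ * W * F)) :=
    eventually_of_mem (isOpen_Ioo.mem_nhds hρ₀) fun ρ hρ => (hpd ρ hρ).isUnit
  have h1 := hasDerivAt_pencilQuad _ _ (Fᵀ *ᵥ (diagonal (degVec W) *ᵥ x)) (Fᵀ *ᵥ (W *ᵥ x))
    (hN₀.sub (hC.smul ρ₀)) hunit.self_of_nhds
  have h2 := hasDerivAt_deriv_pencilQuad _ _ (Fᵀ *ᵥ (diagonal (degVec W) *ᵥ x)) (Fᵀ *ᵥ (W *ᵥ x))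
    hN₀ hC hunit
  rw [T2crit_eq_pencilQuad W F x hWsymm, sresid_dotProduct_eq W F x hWsymm,
    transpose_mul_mulVec_sresid, transpose_mul_Rmat_mul]
  refine ⟨h1.differentiableAt, h2.differentiableAt, h2.deriv, ?_⟩
  exact mul_nonneg zero_le_two ((hpd ρ₀ hρ₀).inv.posSemidef.dotProduct_mulVec_nonneg _)

/-- `ρ ↦ T₂(x,ρ)` is twice differentiable at `ρ₀ ∈ (0,1)`, its second
derivative there equals `2·s(ρ₀)ᵀ W F [Fᵀ(D-ρ₀W)F]⁻¹ Fᵀ W s(ρ₀)`, which is nonnegative. -/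
theorem second_deriv_T2 {n p : ℕ} (W : Matrix (Fin n) (Fin n) ℝ)
    (hWsymm : W.IsSymm) (hW01 : ∀ i j, W i j = 0 ∨ W i j = 1) (hWdiag : ∀ i, W i i = 0)
    (hdeg : ∀ i, 1 ≤ degVec W i)
    (F : Matrix (Fin n) (Fin (p + 1)) ℝ) (hF : F.rank = p + 1)
    (x : Fin n → ℝ) (ρ₀ : ℝ) (hρ₀ : ρ₀ ∈ Set.Ioo (0 : ℝ) 1) :
    DifferentiableAt ℝ (fun ρ => T2crit W F x ρ) ρ₀ ∧
    DifferentiableAt ℝ (deriv (fun ρ => T2crit W F x ρ)) ρ₀ ∧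
    deriv (deriv (fun ρ => T2crit W F x ρ)) ρ₀ =
      2 * (sresid W F x ρ₀ ⬝ᵥ
        (W * F * (Fᵀ * Rmat W ρ₀ * F)⁻¹ * Fᵀ * W).mulVec (sresid W F x ρ₀)) ∧
    0 ≤ 2 * (sresid W F x ρ₀ ⬝ᵥ
        (W * F * (Fᵀ * Rmat W ρ₀ * F)⁻¹ * Fᵀ * W).mulVec (sresid W F x ρ₀)) :=
  second_deriv_T2_general W hWsymm hW01 hdeg F hF x ρ₀ hρ₀
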